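/- arXiv:2604.09414 — 4 statements merged into one kernel-verified Lean document; each statement's English description precedes it below -/
import Mathlib

section
/- Let K ≥ 2, J ≥ 1, fix k* ∈ {1,…,K}, y ∈ {1,…,K}, and t ∈ {0,1}^J. For a ∈ ℝ^{K+J} define ξ_k(a) = e^{a_k}/∑_{k'=1}^K e^{a_{k'}}, B(a) = ∑_{k ≠ k*, k ≤ K} e^{a_k}, π_r(a) = e^{a_r}/B(a) for r ≤ K with r ≠ k*, ψ_j(a) = e^{a_{K+j}}/(e^{a_{K+j}} + B(a)), and Φ(a) = −log ξ_y(a) − ∑_{j=1}^J [ t_j log ψ_j(a) + (1 − t_j) log(1 − ψ_j(a)) ]. Then for every r ∈ {1,…,K} with r ≠ k*, ∂Φ/∂a_r (a) = (ξ_r(a) − 1{r = y}) − π_r(a) ∑_{j=1}^J (ψ_j(a) − t_j), and ∂Φ/∂a_{k*}(a) = ξ_{k*}(a) − 1{k* = y}. -/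
private lemma upd_cast {K J : ℕ} (a : Fin (K + J) → ℝ) (r k : Fin K) (x : ℝ) :
    Function.update a (Fin.castAdd J r) x (Fin.castAdd J k)
      = if k = r then x else a (Fin.castAdd J k) := by
  rcases eq_or_ne k r with h | h
  · subst h; simp
  · rw [Function.update_of_ne, if_neg h]
    intro hkr
    exact h (Fin.ext (by simpa using congrArg Fin.val hkr))

private lemma upd_nat {K J : ℕ} (a : Fin (K + J) → ℝ) (r : Fin K) (j : Fin J) (x : ℝ) :
    Function.update a (Fin.castAdd J r) x (Fin.natAdd K j) = a (Fin.natAdd K j) := by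
  apply Function.update_of_ne
  intro h
  have h1 : (K : ℕ) + (j : ℕ) = (r : ℕ) := by simpa using congrArg Fin.val h
  have h2 := r.isLt
  omega

/-- A-SM class-gradient formula with expert leakage: for non-max class
coordinates `r ≠ k*`,
`∂Φ/∂a_r = (ξ_r − 1{r=y}) − π_r ∑_j (ψ_j − t_j)`,
and for the max class coordinate `∂Φ/∂a_{k*} = ξ_{k*} − 1{k*=y}`. -/
theorem stmt10 (K J : ℕ) (hK : 2 ≤ K) (hJ : 0 < J)
    (kstar y : Fin K) (t : Fin J → ℝ) (ht : ∀ j, t j = 0 ∨ t j = 1)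
    (ξ : (Fin (K + J) → ℝ) → Fin K → ℝ)
    (B : (Fin (K + J) → ℝ) → ℝ)
    (π : (Fin (K + J) → ℝ) → Fin K → ℝ)
    (ψ : (Fin (K + J) → ℝ) → Fin J → ℝ)
    (Φ : (Fin (K + J) → ℝ) → ℝ)
    (hξ : ∀ a k, ξ a k =
      Real.exp (a (Fin.castAdd J k)) / ∑ k', Real.exp (a (Fin.castAdd J k')))
    (hB : ∀ a, B a = ∑ k ∈ Finset.univ.erase kstar,
      Real.exp (a (Fin.castAdd J k)))
    (hπ : ∀ a r, π a r = Real.exp (a (Fin.castAdd J r)) / B a)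
    (hψ : ∀ a j, ψ a j =
      Real.exp (a (Fin.natAdd K j)) / (Real.exp (a (Fin.natAdd K j)) + B a))
    (hΦ : ∀ a, Φ a = -Real.log (ξ a y)
      - ∑ j, (t j * Real.log (ψ a j) + (1 - t j) * Real.log (1 - ψ a j))) :
    (∀ (a : Fin (K + J) → ℝ) (r : Fin K), r ≠ kstar →
      HasDerivAt (fun x => Φ (Function.update a (Fin.castAdd J r) x))
        ((ξ a r - if r = y then 1 else 0) - π a r * ∑ j, (ψ a j - t j))
        (a (Fin.castAdd J r))) ∧
    (∀ a : Fin (K + J) → ℝ,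
      HasDerivAt (fun x => Φ (Function.update a (Fin.castAdd J kstar) x))
        (ξ a kstar - if kstar = y then 1 else 0)
        (a (Fin.castAdd J kstar))) := by
  constructor
  · -- non-max coordinate
    intro a r hr
    set w := a (Fin.castAdd J r) with hw
    set Cr := ∑ k ∈ Finset.univ.erase r, Real.exp (a (Fin.castAdd J k)) with hCr
    set Dr := ∑ k ∈ (Finset.univ.erase kstar).erase r, Real.exp (a (Fin.castAdd J k)) with hDr
    have hCr0 : 0 ≤ Cr := Finset.sum_nonneg fun _ _ => (Real.exp_pos _).le
    have hDr0 : 0 ≤ Dr := Finset.sum_nonneg fun _ _ => (Real.exp_pos _).le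
    have hrE : r ∈ Finset.univ.erase kstar := Finset.mem_erase.mpr ⟨hr, Finset.mem_univ r⟩
    have hSx : ∀ x : ℝ,
        (∑ k', Real.exp (Function.update a (Fin.castAdd J r) x (Fin.castAdd J k')))
          = Real.exp x + Cr := by
      intro x
      rw [← Finset.add_sum_erase _ _ (Finset.mem_univ r), Function.update_self]
      congr 1
      refine Finset.sum_congr rfl fun k hk => ?_
      rw [upd_cast, if_neg (Finset.mem_erase.mp hk).1]
    have hBx : ∀ x : ℝ, B (Function.update a (Fin.castAdd J r) x) = Real.exp x + Dr := by
      intro x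
      rw [hB, ← Finset.add_sum_erase _ _ hrE, Function.update_self]
      congr 1
      refine Finset.sum_congr rfl fun k hk => ?_
      rw [upd_cast, if_neg (Finset.mem_erase.mp hk).1]
    have hBa : B a = Real.exp w + Dr := by
      have h := hBx (a (Fin.castAdd J r))
      rwa [Function.update_eq_self] at h
    have hSa : (∑ k', Real.exp (a (Fin.castAdd J k'))) = Real.exp w + Cr := by
      have h := hSx (a (Fin.castAdd J r))
      rwa [Function.update_eq_self] at h
    clear_value w Cr Dr
    have hfun : ∀ x : ℝ, Φ (Function.update a (Fin.castAdd J r) x)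
        = (Real.log (Real.exp x + Cr) - (if r = y then x else a (Fin.castAdd J y)))
          - ∑ j, (t j * (a (Fin.natAdd K j)
                - Real.log (Real.exp (a (Fin.natAdd K j)) + (Real.exp x + Dr)))
              + (1 - t j) * (Real.log (Real.exp x + Dr)
                - Real.log (Real.exp (a (Fin.natAdd K j)) + (Real.exp x + Dr)))) := by
      intro x
      have hS : (0:ℝ) < Real.exp x + Cr :=
        add_pos_of_pos_of_nonneg (Real.exp_pos _) hCr0
      have hBp : (0:ℝ) < Real.exp x + Dr :=
        add_pos_of_pos_of_nonneg (Real.exp_pos _) hDr0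
      rw [hΦ]
      congr 1
      · rw [hξ, hSx, upd_cast, Real.log_div (Real.exp_pos _).ne' hS.ne', Real.log_exp]
        rcases eq_or_ne y r with h | h
        · subst h; simp only [if_pos rfl]; ring
        · rw [if_neg h, if_neg (Ne.symm h)]; ring
      · refine Finset.sum_congr rfl fun j _ => ?_
        have hE : (0:ℝ) < Real.exp (a (Fin.natAdd K j)) := Real.exp_pos _
        have hEB : (0:ℝ) < Real.exp (a (Fin.natAdd K j)) + (Real.exp x + Dr) :=
          add_pos hE hBp
        have hψx : ψ (Function.update a (Fin.castAdd J r) x) j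
            = Real.exp (a (Fin.natAdd K j))
                / (Real.exp (a (Fin.natAdd K j)) + (Real.exp x + Dr)) := by
          rw [hψ, upd_nat, hBx]
        have h1ψ : 1 - ψ (Function.update a (Fin.castAdd J r) x) j
            = (Real.exp x + Dr) / (Real.exp (a (Fin.natAdd K j)) + (Real.exp x + Dr)) := by
          rw [hψx]; field_simp; ring
        rw [h1ψ, hψx, Real.log_div hE.ne' hEB.ne', Real.log_exp,
            Real.log_div hBp.ne' hEB.ne']
    have hSw : (0:ℝ) < Real.exp w + Cr :=
      add_pos_of_pos_of_nonneg (Real.exp_pos _) hCr0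
    have hBw : (0:ℝ) < Real.exp w + Dr :=
      add_pos_of_pos_of_nonneg (Real.exp_pos _) hDr0
    have hd1 : HasDerivAt (fun x => Real.log (Real.exp x + Cr))
        (Real.exp w / (Real.exp w + Cr)) w :=
      ((Real.hasDerivAt_exp w).add_const Cr).log hSw.ne'
    have hd2 : HasDerivAt (fun x : ℝ => if r = y then x else a (Fin.castAdd J y))
        (if r = y then (1:ℝ) else 0) w := by
      split_ifs
      · exact hasDerivAt_id w
      · exact hasDerivAt_const w _
    have hb : HasDerivAt (fun x => Real.exp x + Dr) (Real.exp w) w :=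
      (Real.hasDerivAt_exp w).add_const Dr
    have hlogB : HasDerivAt (fun x => Real.log (Real.exp x + Dr))
        (Real.exp w / (Real.exp w + Dr)) w := hb.log hBw.ne'
    have hd3 : HasDerivAt (fun x => ∑ j, (t j * (a (Fin.natAdd K j)
                - Real.log (Real.exp (a (Fin.natAdd K j)) + (Real.exp x + Dr)))
              + (1 - t j) * (Real.log (Real.exp x + Dr)
                - Real.log (Real.exp (a (Fin.natAdd K j)) + (Real.exp x + Dr)))))
        (∑ j, (t j * (-(Real.exp w / (Real.exp (a (Fin.natAdd K j)) + (Real.exp w + Dr))))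
              + (1 - t j) * (Real.exp w / (Real.exp w + Dr)
                - Real.exp w / (Real.exp (a (Fin.natAdd K j)) + (Real.exp w + Dr))))) w := by
      refine HasDerivAt.fun_sum fun j _ => ?_
      have hEB : (0:ℝ) < Real.exp (a (Fin.natAdd K j)) + (Real.exp w + Dr) :=
        add_pos (Real.exp_pos _) hBw
      have hA : HasDerivAt (fun x => Real.log (Real.exp (a (Fin.natAdd K j)) + (Real.exp x + Dr)))
          (Real.exp w / (Real.exp (a (Fin.natAdd K j)) + (Real.exp w + Dr))) w :=
        (hb.const_add _).log hEB.ne'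
      exact (HasDerivAt.const_mul (t j) (hA.const_sub _)).add
        (HasDerivAt.const_mul (1 - t j) (hlogB.sub hA))
    have hG := (hd1.sub hd2).sub hd3
    have hfe : (fun x => Φ (Function.update a (Fin.castAdd J r) x))
        = fun x => (Real.log (Real.exp x + Cr) - (if r = y then x else a (Fin.castAdd J y)))
          - ∑ j, (t j * (a (Fin.natAdd K j)
                - Real.log (Real.exp (a (Fin.natAdd K j)) + (Real.exp x + Dr)))
              + (1 - t j) * (Real.log (Real.exp x + Dr)
                - Real.log (Real.exp (a (Fin.natAdd K j)) + (Real.exp x + Dr)))) :=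
      funext hfun
    rw [hfe]
    refine hG.congr_deriv ?_
    rw [hξ, hSa, hπ, hBa, ← hw]
    congr 1
    rw [Finset.mul_sum]
    refine Finset.sum_congr rfl fun j _ => ?_
    rw [hψ, hBa]
    have hEB : (0:ℝ) < Real.exp (a (Fin.natAdd K j)) + (Real.exp w + Dr) :=
      add_pos (Real.exp_pos _) hBw
    field_simp
    ring
  · -- max coordinate
    intro a
    set w := a (Fin.castAdd J kstar) with hw
    set C := ∑ k ∈ Finset.univ.erase kstar, Real.exp (a (Fin.castAdd J k)) with hC
    have hC0 : 0 ≤ C := Finset.sum_nonneg fun _ _ => (Real.exp_pos _).le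
    have hSx : ∀ x : ℝ,
        (∑ k', Real.exp (Function.update a (Fin.castAdd J kstar) x (Fin.castAdd J k')))
          = Real.exp x + C := by
      intro x
      rw [← Finset.add_sum_erase _ _ (Finset.mem_univ kstar), Function.update_self]
      congr 1
      refine Finset.sum_congr rfl fun k hk => ?_
      rw [upd_cast, if_neg (Finset.mem_erase.mp hk).1]
    have hBx : ∀ x : ℝ, B (Function.update a (Fin.castAdd J kstar) x) = B a := by
      intro x
      rw [hB, hB]
      refine Finset.sum_congr rfl fun k hk => ?_
      rw [upd_cast, if_neg (Finset.mem_erase.mp hk).1]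
    have hψx : ∀ (x : ℝ) (j : Fin J),
        ψ (Function.update a (Fin.castAdd J kstar) x) j = ψ a j := by
      intro x j
      rw [hψ, hψ, upd_nat, hBx]
    have hSa : (∑ k', Real.exp (a (Fin.castAdd J k'))) = Real.exp w + C := by
      have h := hSx (a (Fin.castAdd J kstar))
      rwa [Function.update_eq_self] at h
    clear_value w C
    have hfun : ∀ x : ℝ, Φ (Function.update a (Fin.castAdd J kstar) x)
        = (Real.log (Real.exp x + C) - (if kstar = y then x else a (Fin.castAdd J y)))
          - ∑ j, (t j * Real.log (ψ a j) + (1 - t j) * Real.log (1 - ψ a j)) := by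
      intro x
      have hS : (0:ℝ) < Real.exp x + C :=
        add_pos_of_pos_of_nonneg (Real.exp_pos _) hC0
      rw [hΦ]
      congr 1
      · rw [hξ, hSx, upd_cast, Real.log_div (Real.exp_pos _).ne' hS.ne', Real.log_exp]
        rcases eq_or_ne y kstar with h | h
        · subst h; simp only [if_pos rfl]; ring
        · rw [if_neg h, if_neg (Ne.symm h)]; ring
      · refine Finset.sum_congr rfl fun j _ => ?_
        rw [hψx]
    have hSw : (0:ℝ) < Real.exp w + C :=
      add_pos_of_pos_of_nonneg (Real.exp_pos _) hC0
    have hd1 : HasDerivAt (fun x => Real.log (Real.exp x + C))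
        (Real.exp w / (Real.exp w + C)) w :=
      ((Real.hasDerivAt_exp w).add_const C).log hSw.ne'
    have hd2 : HasDerivAt (fun x : ℝ => if kstar = y then x else a (Fin.castAdd J y))
        (if kstar = y then (1:ℝ) else 0) w := by
      split_ifs
      · exact hasDerivAt_id w
      · exact hasDerivAt_const w _
    have hd3 : HasDerivAt (fun _ : ℝ =>
        ∑ j, (t j * Real.log (ψ a j) + (1 - t j) * Real.log (1 - ψ a j))) 0 w :=
      hasDerivAt_const w _
    have hG := (hd1.sub hd2).sub hd3
    have hfe : (fun x => Φ (Function.update a (Fin.castAdd J kstar) x))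
        = fun x => (Real.log (Real.exp x + C) - (if kstar = y then x else a (Fin.castAdd J y)))
          - ∑ j, (t j * Real.log (ψ a j) + (1 - t j) * Real.log (1 - ψ a j)) :=
      funext hfun
    rw [hfe]
    refine hG.congr_deriv ?_
    rw [hξ, hSa, ← hw]
    ring
end

section
/- Let K ≥ 2, J ≥ 1, fix k* ∈ {1,…,K}, y ∈ {1,…,K}, t ∈ {0,1}^J, and let Φ, π, ψ, B be as in the A-SM surrogate with fixed maximizing class k*. Then for every r ∈ {1,…,K} with r ≠ k* and every j ∈ {1,…,J}, the mixed second partial derivative satisfies ∂²Φ/∂a_r ∂a_{K+j}(a) = −π_r(a) · ψ_j(a)(1 − ψ_j(a)), and ∂²Φ/∂a_{k*} ∂a_{K+j}(a) = 0. Consequently the K×J mixed class–expert block of the Hessian equals the rank-one matrix −π(a) d(a)^⊤ (with π extended by 0 at coordinate k* and d_j(a) = ψ_j(a)(1−ψ_j(a))), and its operator norm equals ‖π(a)‖₂ ‖d(a)‖₂ ≤ √J / 4. -/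
open Finset

private lemma asm_aux_pr {K J : ℕ} (i : Fin (K+J)) (b : Fin (K+J) → ℝ) :
    HasFDerivAt (fun b : Fin (K+J) → ℝ => b i)
      (ContinuousLinearMap.proj (R := ℝ) (φ := fun _ : Fin (K+J) => ℝ) i) b :=
  hasFDerivAt_apply (𝕜 := ℝ) i b

-- first derivative in expert directions
private lemma asm_fderiv1 (K J : ℕ) (hK : 2 ≤ K)
    (kstar y : Fin K) (t : Fin J → ℝ)
    (ξ : (Fin (K + J) → ℝ) → Fin K → ℝ)
    (B : (Fin (K + J) → ℝ) → ℝ)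
    (ψ : (Fin (K + J) → ℝ) → Fin J → ℝ)
    (Φ : (Fin (K + J) → ℝ) → ℝ)
    (hξ : ∀ a k, ξ a k =
      Real.exp (a (Fin.castAdd J k)) / ∑ k', Real.exp (a (Fin.castAdd J k')))
    (hB : ∀ a, B a = ∑ k ∈ Finset.univ.erase kstar,
      Real.exp (a (Fin.castAdd J k)))
    (hψ : ∀ a j, ψ a j =
      Real.exp (a (Fin.natAdd K j)) / (Real.exp (a (Fin.natAdd K j)) + B a))
    (hΦ : ∀ a, Φ a = -Real.log (ξ a y)
      - ∑ j, (t j * Real.log (ψ a j) + (1 - t j) * Real.log (1 - ψ a j)))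
    (b : Fin (K + J) → ℝ) (j0 : Fin J) :
    fderiv ℝ Φ b (Pi.single (Fin.natAdd K j0) 1) = ψ b j0 - t j0 := by
  have hBpos : ∀ c, 0 < B c := by
    intro c
    rw [hB]
    apply Finset.sum_pos (fun k _ => Real.exp_pos _)
    rw [Finset.erase_nonempty (Finset.mem_univ kstar)]
    rw [← Finset.one_lt_card_iff_nontrivial]
    simpa using (show 1 < K by omega)
  have hSpos : ∀ c : Fin (K+J) → ℝ, 0 < ∑ k', Real.exp (c (Fin.castAdd J k')) := by
    intro c
    haveI : Nonempty (Fin K) := ⟨⟨0, by omega⟩⟩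
    apply Finset.sum_pos (fun k _ => Real.exp_pos _)
    exact Finset.univ_nonempty
  have hEBpos : ∀ c j, 0 < Real.exp (c (Fin.natAdd K j)) + B c :=
    fun c j => add_pos (Real.exp_pos _) (hBpos c)
  -- rewrite Φ in log-expanded form
  have hΦ' : Φ = fun c => -(c (Fin.castAdd J y))
      + Real.log (∑ k', Real.exp (c (Fin.castAdd J k')))
      + ∑ j, (Real.log (Real.exp (c (Fin.natAdd K j)) + B c) - t j * (c (Fin.natAdd K j)))
      - (∑ j, (1 - t j)) * Real.log (B c) := by
    funext c
    have h1 : Real.log (ξ c y) = c (Fin.castAdd J y)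
        - Real.log (∑ k', Real.exp (c (Fin.castAdd J k'))) := by
      rw [hξ, Real.log_div (Real.exp_ne_zero _) (ne_of_gt (hSpos c)), Real.log_exp]
    have h2 : ∀ j, t j * Real.log (ψ c j) + (1 - t j) * Real.log (1 - ψ c j)
        = t j * (c (Fin.natAdd K j)) + (1 - t j) * Real.log (B c)
          - Real.log (Real.exp (c (Fin.natAdd K j)) + B c) := by
      intro j
      have hb := hBpos c
      have heb := hEBpos c j
      have hψ1 : 1 - Real.exp (c (Fin.natAdd K j)) / (Real.exp (c (Fin.natAdd K j)) + B c)
          = B c / (Real.exp (c (Fin.natAdd K j)) + B c) := by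
        field_simp
        ring
      rw [hψ, hψ1, Real.log_div (Real.exp_ne_zero _) (ne_of_gt heb),
        Real.log_div (ne_of_gt hb) (ne_of_gt heb), Real.log_exp]
      ring
    rw [hΦ, h1, Finset.sum_congr rfl (fun j _ => h2 j)]
    simp only [Finset.sum_sub_distrib, Finset.sum_add_distrib, ← Finset.sum_mul]
    ring
  rw [hΦ']
  -- build the derivative
  set pr : Fin (K+J) → ((Fin (K+J) → ℝ) →L[ℝ] ℝ) :=
    fun i => ContinuousLinearMap.proj (R := ℝ) (φ := fun _ : Fin (K+J) => ℝ) i with hpr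
  have hBfun : B = fun c => ∑ k ∈ Finset.univ.erase kstar,
      Real.exp (c (Fin.castAdd J k)) := funext hB
  have hBd : HasFDerivAt B
      (∑ k ∈ Finset.univ.erase kstar,
        Real.exp (b (Fin.castAdd J k)) • pr (Fin.castAdd J k)) b := by
    rw [hBfun]
    exact HasFDerivAt.fun_sum (fun k _ => (asm_aux_pr _ b).exp)
  have hSd : HasFDerivAt (fun c : Fin (K+J) → ℝ => ∑ k', Real.exp (c (Fin.castAdd J k')))
      (∑ k', Real.exp (b (Fin.castAdd J k')) • pr (Fin.castAdd J k')) b :=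
    HasFDerivAt.fun_sum (fun k _ => (asm_aux_pr _ b).exp)
  have hmain : HasFDerivAt (fun c => -(c (Fin.castAdd J y))
      + Real.log (∑ k', Real.exp (c (Fin.castAdd J k')))
      + ∑ j, (Real.log (Real.exp (c (Fin.natAdd K j)) + B c) - t j * (c (Fin.natAdd K j)))
      - (∑ j, (1 - t j)) * Real.log (B c))
      ((-pr (Fin.castAdd J y)
        + (∑ k', Real.exp (b (Fin.castAdd J k')))⁻¹ •
            (∑ k', Real.exp (b (Fin.castAdd J k')) • pr (Fin.castAdd J k'))
        + ∑ j, ((Real.exp (b (Fin.natAdd K j)) + B b)⁻¹ •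
            (Real.exp (b (Fin.natAdd K j)) • pr (Fin.natAdd K j)
              + ∑ k ∈ Finset.univ.erase kstar,
                  Real.exp (b (Fin.castAdd J k)) • pr (Fin.castAdd J k))
            - t j • pr (Fin.natAdd K j)))
        - (∑ j, (1 - t j)) • ((B b)⁻¹ •
            (∑ k ∈ Finset.univ.erase kstar,
              Real.exp (b (Fin.castAdd J k)) • pr (Fin.castAdd J k)))) b := by
    refine HasFDerivAt.sub (HasFDerivAt.add (HasFDerivAt.add ?_ ?_) ?_) ?_
    · exact (asm_aux_pr _ b).neg
    · exact hSd.log (ne_of_gt (hSpos b))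
    · refine HasFDerivAt.fun_sum (fun j _ => HasFDerivAt.sub ?_ ?_)
      · exact (((asm_aux_pr _ b).exp).add hBd).log (ne_of_gt (hEBpos b j))
      · exact (asm_aux_pr _ b).const_mul (t j)
    · exact (hBd.log (ne_of_gt (hBpos b))).const_mul _
  rw [hmain.fderiv]
  have hca : ∀ k : Fin K, pr (Fin.castAdd J k) (Pi.single (Fin.natAdd K j0) 1) = 0 := by
    intro k
    simp only [hpr, ContinuousLinearMap.proj_apply, Pi.single_apply]
    rw [if_neg]
    simp [Fin.ext_iff]; omega
  have hna : ∀ j : Fin J, pr (Fin.natAdd K j) (Pi.single (Fin.natAdd K j0) 1)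
      = if j = j0 then 1 else 0 := by
    intro j
    simp only [hpr, ContinuousLinearMap.proj_apply, Pi.single_apply]
    congr 1
    simp [Fin.ext_iff, eq_comm]
  simp only [ContinuousLinearMap.add_apply, ContinuousLinearMap.sub_apply,
    ContinuousLinearMap.neg_apply, ContinuousLinearMap.smul_apply,
    ContinuousLinearMap.coe_sum', Finset.sum_apply, hca, hna, smul_eq_mul,
    mul_zero, Finset.sum_const_zero, mul_ite, mul_one, add_zero, neg_zero, zero_add,
    sub_zero, mul_zero]
  rw [Finset.sum_sub_distrib, Finset.sum_ite_eq' Finset.univ j0,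
    Finset.sum_ite_eq' Finset.univ j0]
  simp only [Finset.mem_univ, if_true]
  rw [hψ, div_eq_mul_inv]
  ring

private lemma asm_fderiv2 (K J : ℕ) (hK : 2 ≤ K)
    (kstar : Fin K) (t : Fin J → ℝ)
    (B : (Fin (K + J) → ℝ) → ℝ)
    (π : (Fin (K + J) → ℝ) → Fin K → ℝ)
    (ψ : (Fin (K + J) → ℝ) → Fin J → ℝ)
    (hB : ∀ a, B a = ∑ k ∈ Finset.univ.erase kstar,
      Real.exp (a (Fin.castAdd J k)))
    (hπ : ∀ a r, π a r = Real.exp (a (Fin.castAdd J r)) / B a)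
    (hψ : ∀ a j, ψ a j =
      Real.exp (a (Fin.natAdd K j)) / (Real.exp (a (Fin.natAdd K j)) + B a))
    (a : Fin (K + J) → ℝ) (r : Fin K) (j : Fin J) :
    fderiv ℝ (fun b => ψ b j - t j) a (Pi.single (Fin.castAdd J r) 1)
      = if r = kstar then 0 else -(π a r * (ψ a j * (1 - ψ a j))) := by
  have hBpos : ∀ c, 0 < B c := by
    intro c
    rw [hB]
    apply Finset.sum_pos (fun k _ => Real.exp_pos _)
    rw [Finset.erase_nonempty (Finset.mem_univ kstar)]
    rw [← Finset.one_lt_card_iff_nontrivial]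
    simpa using (show 1 < K by omega)
  have hEBpos : ∀ c, 0 < Real.exp (c (Fin.natAdd K j)) + B c :=
    fun c => add_pos (Real.exp_pos _) (hBpos c)
  set pr : Fin (K+J) → ((Fin (K+J) → ℝ) →L[ℝ] ℝ) :=
    fun i => ContinuousLinearMap.proj (R := ℝ) (φ := fun _ : Fin (K+J) => ℝ) i with hpr
  have hBfun : B = fun c => ∑ k ∈ Finset.univ.erase kstar,
      Real.exp (c (Fin.castAdd J k)) := funext hB
  have hBd : HasFDerivAt B
      (∑ k ∈ Finset.univ.erase kstar,
        Real.exp (a (Fin.castAdd J k)) • pr (Fin.castAdd J k)) a := by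
    rw [hBfun]
    exact HasFDerivAt.fun_sum (fun k _ => (asm_aux_pr _ a).exp)
  have hψfun : (fun b => ψ b j - t j)
      = fun b => Real.exp (b (Fin.natAdd K j))
          * (Real.exp (b (Fin.natAdd K j)) + B b)⁻¹ - t j := by
    funext b; rw [hψ, div_eq_mul_inv]
  rw [hψfun]
  have hEB : HasFDerivAt (fun b : Fin (K+J) → ℝ => Real.exp (b (Fin.natAdd K j)) + B b)
      (Real.exp (a (Fin.natAdd K j)) • pr (Fin.natAdd K j)
        + ∑ k ∈ Finset.univ.erase kstar,
            Real.exp (a (Fin.castAdd J k)) • pr (Fin.castAdd J k)) a :=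
    ((asm_aux_pr _ a).exp).add hBd
  have hinv : HasFDerivAt (fun b : Fin (K+J) → ℝ =>
        (Real.exp (b (Fin.natAdd K j)) + B b)⁻¹)
      ((-((Real.exp (a (Fin.natAdd K j)) + B a) ^ 2)⁻¹) •
        (Real.exp (a (Fin.natAdd K j)) • pr (Fin.natAdd K j)
          + ∑ k ∈ Finset.univ.erase kstar,
              Real.exp (a (Fin.castAdd J k)) • pr (Fin.castAdd J k))) a :=
    (hasDerivAt_inv (ne_of_gt (hEBpos a))).comp_hasFDerivAt a hEB
  have hmul := ((asm_aux_pr (Fin.natAdd K j) a).exp.fun_mul hinv).sub_const (t j)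
  rw [hmul.fderiv]
  have hca : ∀ k : Fin K, pr (Fin.castAdd J k) (Pi.single (Fin.castAdd J r) 1)
      = if k = r then 1 else 0 := by
    intro k
    simp only [hpr, ContinuousLinearMap.proj_apply, Pi.single_apply]
    congr 1
    simp [Fin.ext_iff, eq_comm]
  have hna : pr (Fin.natAdd K j) (Pi.single (Fin.castAdd J r) 1) = 0 := by
    simp only [hpr, ContinuousLinearMap.proj_apply, Pi.single_apply]
    rw [if_neg]
    intro h
    simp [Fin.ext_iff] at h
    omega
  have hna' : ContinuousLinearMap.proj (R := ℝ) (φ := fun _ : Fin (K+J) => ℝ) (Fin.natAdd K j)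
      (Pi.single (Fin.castAdd J r) 1) = 0 := hna
  simp only [ContinuousLinearMap.add_apply, ContinuousLinearMap.sub_apply,
    ContinuousLinearMap.smul_apply, ContinuousLinearMap.coe_sum', Finset.sum_apply,
    hca, hna, hna', smul_eq_mul, mul_zero, mul_ite, mul_one, zero_add, add_zero]
  rw [Finset.sum_ite_eq' (Finset.univ.erase kstar) r]
  by_cases hr : r = kstar
  · simp [hr]
  · rw [if_pos (Finset.mem_erase.2 ⟨hr, Finset.mem_univ r⟩), if_neg hr]
    rw [hπ, hψ]
    have h1 := ne_of_gt (hBpos a)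
    have h2 := ne_of_gt (hEBpos a)
    field_simp
    ring


set_option maxHeartbeats 1000000 in


/-- A-SM mixed class–expert Hessian block: for non-max classes `r ≠ k*`,
`∂²Φ/∂a_r ∂a_{K+j} = −π_r ψ_j(1−ψ_j)` and `∂²Φ/∂a_{k*} ∂a_{K+j} = 0`; the
`K×J` mixed block is the rank-one matrix `−π dᵀ` (with `π` extended by `0`
at `k*`, `d_j = ψ_j(1−ψ_j)`) and its operator norm equals
`‖π‖₂ ‖d‖₂ ≤ √J / 4`. -/
theorem stmt11 (K J : ℕ) (hK : 2 ≤ K) (hJ : 0 < J)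
    (kstar y : Fin K) (t : Fin J → ℝ) (ht : ∀ j, t j = 0 ∨ t j = 1)
    (ξ : (Fin (K + J) → ℝ) → Fin K → ℝ)
    (B : (Fin (K + J) → ℝ) → ℝ)
    (π : (Fin (K + J) → ℝ) → Fin K → ℝ)
    (ψ : (Fin (K + J) → ℝ) → Fin J → ℝ)
    (Φ : (Fin (K + J) → ℝ) → ℝ)
    (hξ : ∀ a k, ξ a k =
      Real.exp (a (Fin.castAdd J k)) / ∑ k', Real.exp (a (Fin.castAdd J k')))
    (hB : ∀ a, B a = ∑ k ∈ Finset.univ.erase kstar,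
      Real.exp (a (Fin.castAdd J k)))
    (hπ : ∀ a r, π a r = Real.exp (a (Fin.castAdd J r)) / B a)
    (hψ : ∀ a j, ψ a j =
      Real.exp (a (Fin.natAdd K j)) / (Real.exp (a (Fin.natAdd K j)) + B a))
    (hΦ : ∀ a, Φ a = -Real.log (ξ a y)
      - ∑ j, (t j * Real.log (ψ a j) + (1 - t j) * Real.log (1 - ψ a j)))
    (a : Fin (K + J) → ℝ)
    -- the extended non-max-class weight vector and the expert curvature vector
    (πext : Fin K → ℝ) (hπext : ∀ r, πext r = if r = kstar then 0 else π a r)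
    (d : Fin J → ℝ) (hd : ∀ j, d j = ψ a j * (1 - ψ a j))
    -- the K×J mixed class–expert block of the Hessian
    (Hmix : Matrix (Fin K) (Fin J) ℝ)
    (hHmix : ∀ (r : Fin K) (j : Fin J), Hmix r j =
      fderiv ℝ (fun b => fderiv ℝ Φ b (Pi.single (Fin.natAdd K j) 1)) a
        (Pi.single (Fin.castAdd J r) 1)) :
    (∀ (r : Fin K) (j : Fin J), r ≠ kstar →
      Hmix r j = -(π a r * (ψ a j * (1 - ψ a j)))) ∧
    (∀ j : Fin J, Hmix kstar j = 0) ∧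
    Hmix = -Matrix.vecMulVec πext d ∧
    ‖LinearMap.toContinuousLinearMap (Matrix.toEuclideanLin Hmix)‖
      = Real.sqrt (∑ r, πext r ^ 2) * Real.sqrt (∑ j, d j ^ 2) ∧
    Real.sqrt (∑ r, πext r ^ 2) * Real.sqrt (∑ j, d j ^ 2)
      ≤ Real.sqrt J / 4 := by
  have key : ∀ (r : Fin K) (j : Fin J), Hmix r j
      = if r = kstar then 0 else -(π a r * (ψ a j * (1 - ψ a j))) := by
    intro r j
    rw [hHmix]
    have h1 : (fun b => fderiv ℝ Φ b (Pi.single (Fin.natAdd K j) 1))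
        = fun b => ψ b j - t j :=
      funext fun b => asm_fderiv1 K J hK kstar y t ξ B ψ Φ hξ hB hψ hΦ b j
    rw [h1]
    exact asm_fderiv2 K J hK kstar t B π ψ hB hπ hψ a r j
  have hBpos : 0 < B a := by
    rw [hB]
    apply Finset.sum_pos (fun k _ => Real.exp_pos _)
    rw [Finset.erase_nonempty (Finset.mem_univ kstar)]
    rw [← Finset.one_lt_card_iff_nontrivial]
    simpa using (show 1 < K by omega)
  have hEBpos : ∀ j : Fin J, 0 < Real.exp (a (Fin.natAdd K j)) + B a :=
    fun j => add_pos (Real.exp_pos _) hBpos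
  have hmat : Hmix = -Matrix.vecMulVec πext d := by
    ext r j
    rw [key, Matrix.neg_apply, Matrix.vecMulVec_apply, hπext, hd]
    by_cases hr : r = kstar <;> simp [hr]
  -- operator norm
  set P : EuclideanSpace ℝ (Fin K) := (WithLp.equiv 2 _).symm πext with hP
  set D : EuclideanSpace ℝ (Fin J) := (WithLp.equiv 2 _).symm d with hD
  have hT : LinearMap.toContinuousLinearMap (Matrix.toEuclideanLin Hmix)
      = -((innerSL ℝ D).smulRight P) := by
    apply ContinuousLinearMap.ext
    intro x
    ext r
    show (Matrix.toEuclideanLin Hmix x) r = _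
    rw [Matrix.toEuclideanLin_apply]
    simp only [ContinuousLinearMap.neg_apply, ContinuousLinearMap.smulRight_apply,
      PiLp.neg_apply, PiLp.smul_apply, smul_eq_mul, WithLp.equiv_symm_apply, PiLp.toLp_apply,
      Matrix.mulVec, dotProduct, hmat, Matrix.neg_apply, Matrix.vecMulVec_apply,
      innerSL_apply_apply, PiLp.inner_apply, RCLike.inner_apply, conj_trivial, hD,
      WithLp.equiv_symm_apply, PiLp.toLp_apply, hP]
    rw [Finset.sum_mul, ← Finset.sum_neg_distrib]
    exact Finset.sum_congr rfl fun j _ => by ring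
  have hnorm : ‖LinearMap.toContinuousLinearMap (Matrix.toEuclideanLin Hmix)‖
      = Real.sqrt (∑ r, πext r ^ 2) * Real.sqrt (∑ j, d j ^ 2) := by
    rw [hT, norm_neg, ContinuousLinearMap.norm_smulRight_apply, innerSL_apply_norm]
    rw [EuclideanSpace.norm_eq, EuclideanSpace.norm_eq]
    simp only [hP, hD, WithLp.equiv_symm_apply, PiLp.toLp_apply, Real.norm_eq_abs, sq_abs]
    ring
  -- bounds
  have hπext_nonneg : ∀ r, 0 ≤ πext r := by
    intro r
    rw [hπext]
    by_cases hr : r = kstar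
    · simp [hr]
    · rw [if_neg hr, hπ]
      positivity
  have hπext_le : ∀ r, πext r ≤ 1 := by
    intro r
    rw [hπext]
    by_cases hr : r = kstar
    · simp [hr]
    · rw [if_neg hr, hπ]
      rw [div_le_one hBpos, hB]
      exact Finset.single_le_sum (f := fun k => Real.exp (a (Fin.castAdd J k)))
        (fun k _ => (Real.exp_pos _).le)
        (Finset.mem_erase.2 ⟨hr, Finset.mem_univ r⟩)
  have hsumπ : ∑ r, πext r = 1 := by
    rw [← Finset.sum_erase_add _ _ (Finset.mem_univ kstar)]
    rw [hπext kstar, if_pos rfl, add_zero]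
    have : ∀ r ∈ Finset.univ.erase kstar, πext r = Real.exp (a (Fin.castAdd J r)) / B a := by
      intro r hr
      rw [hπext, if_neg (Finset.mem_erase.1 hr).1, hπ]
    rw [Finset.sum_congr rfl this, ← Finset.sum_div, ← hB a, div_self (ne_of_gt hBpos)]
  have hπ2 : Real.sqrt (∑ r, πext r ^ 2) ≤ 1 := by
    rw [show (1 : ℝ) = Real.sqrt 1 from (Real.sqrt_one).symm]
    apply Real.sqrt_le_sqrt
    rw [← hsumπ]
    apply Finset.sum_le_sum
    intro r _
    nlinarith [hπext_nonneg r, hπext_le r]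
  have hdle : ∀ j, 0 ≤ d j ∧ d j ≤ 1/4 := by
    intro j
    have hψpos : 0 < ψ a j := by rw [hψ]; positivity
    have hψlt : ψ a j < 1 := by
      rw [hψ, div_lt_one (hEBpos j)]
      linarith [hBpos]
    rw [hd]
    constructor
    · exact mul_nonneg hψpos.le (by linarith)
    · nlinarith [sq_nonneg (ψ a j - 1/2)]
  have hd2 : Real.sqrt (∑ j, d j ^ 2) ≤ Real.sqrt J / 4 := by
    have h1 : ∑ j, d j ^ 2 ≤ (J : ℝ) * (1/16) := by
      calc ∑ j, d j ^ 2 ≤ ∑ _j : Fin J, (1/16 : ℝ) := by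
            apply Finset.sum_le_sum
            intro j _
            nlinarith [(hdle j).1, (hdle j).2]
        _ = (J : ℝ) * (1/16) := by simp [mul_comm]
    calc Real.sqrt (∑ j, d j ^ 2) ≤ Real.sqrt ((J : ℝ) * (1/16)) := Real.sqrt_le_sqrt h1
      _ = Real.sqrt J / 4 := by
          rw [show (J : ℝ) * (1/16) = (J : ℝ) * (1/4)^2 by norm_num,
            Real.sqrt_mul (Nat.cast_nonneg J), Real.sqrt_sq (by norm_num : (0:ℝ) ≤ 1/4)]
          ring
  refine ⟨fun r j hr => by rw [key, if_neg hr],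
    fun j => by rw [key, if_pos rfl], hmat, hnorm, ?_⟩
  calc Real.sqrt (∑ r, πext r ^ 2) * Real.sqrt (∑ j, d j ^ 2)
      ≤ 1 * (Real.sqrt J / 4) := by
        apply mul_le_mul hπ2 hd2 (Real.sqrt_nonneg _)
        norm_num
    _ = Real.sqrt J / 4 := one_mul _
end

section
/- Let K ≥ 1, J ≥ 1, let η, p ∈ Δ^K and α, u ∈ [0,1]^J. Define the plug-in policy at this point: if max_k p_k ≥ max_j u_j, it selects a class ŷ ∈ argmax_k p_k and earns utility η_{ŷ}; otherwise it selects an expert ĵ ∈ argmax_j u_j and earns utility α_{ĵ}. Define the conditional L2D regret δ = max{ max_k η_k, max_j α_j } − (earned utility). Then δ ≤ 2 max{ ‖p − η‖_∞, ‖u − α‖_∞ }, where ‖·‖_∞ is the maximum absolute coordinate difference. -/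
/-- Maximum of a real-valued function over `Fin n` (with `0 < n`). -/
noncomputable def fmax {n : ℕ} (hn : 0 < n) (f : Fin n → ℝ) : ℝ :=
  Finset.univ.sup' ⟨⟨0, hn⟩, Finset.mem_univ _⟩ f

lemma le_fmax {n : ℕ} (hn : 0 < n) (f : Fin n → ℝ) (i : Fin n) : f i ≤ fmax hn f :=
  Finset.le_sup' f (Finset.mem_univ i)

lemma fmax_le {n : ℕ} (hn : 0 < n) (f : Fin n → ℝ) {a : ℝ} (h : ∀ i, f i ≤ a) :
    fmax hn f ≤ a := Finset.sup'_le _ _ (fun i _ => h i)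

/-- Conditional L2D regret of the plug-in policy: if `max_k p_k ≥ max_j u_j`
it selects a class `ŷ ∈ argmax p` and earns `η_ŷ`; otherwise it selects an
expert `ĵ ∈ argmax u` and earns `α_ĵ`. The regret against the Bayes utility
`max(max_k η_k, max_j α_j)` is at most `2 max(‖p−η‖_∞, ‖u−α‖_∞)`. -/
theorem stmt17 (K J : ℕ) (hK : 0 < K) (hJ : 0 < J)
    (η : Fin K → ℝ) (hη0 : ∀ k, 0 ≤ η k) (hη1 : ∑ k, η k = 1)
    (p : Fin K → ℝ) (hp0 : ∀ k, 0 ≤ p k) (hp1 : ∑ k, p k = 1)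
    (α : Fin J → ℝ) (hα : ∀ j, α j ∈ Set.Icc (0 : ℝ) 1)
    (u : Fin J → ℝ) (hu : ∀ j, u j ∈ Set.Icc (0 : ℝ) 1)
    (yhat : Fin K) (hyhat : ∀ k, p k ≤ p yhat)
    (jhat : Fin J) (hjhat : ∀ j, u j ≤ u jhat) :
    max (fmax hK η) (fmax hJ α)
        - (if u jhat ≤ p yhat then η yhat else α jhat)
      ≤ 2 * max (fmax hK fun k => |p k - η k|)
                (fmax hJ fun j => |u j - α j|) := by
  set ε := max (fmax hK fun k => |p k - η k|) (fmax hJ fun j => |u j - α j|) with hε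
  have hεK : ∀ k, |p k - η k| ≤ ε := by
    intro k; rw [hε]; exact le_trans (le_fmax hK (fun k => |p k - η k|) k) (le_max_left _ _)
  have hεJ : ∀ j, |u j - α j| ≤ ε := by
    intro j; rw [hε]; exact le_trans (le_fmax hJ (fun j => |u j - α j|) j) (le_max_right _ _)
  have hη' : ∀ k, η k ≤ p yhat + ε := by
    intro k
    have := abs_le.mp (hεK k)
    linarith [hyhat k]
  have hα' : ∀ j, α j ≤ u jhat + ε := by
    intro j
    have := abs_le.mp (hεJ j)
    linarith [hjhat j]
  have hy : p yhat - ε ≤ η yhat := by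
    have := abs_le.mp (hεK yhat); linarith
  have hj : u jhat - ε ≤ α jhat := by
    have := abs_le.mp (hεJ jhat); linarith
  have hmη : fmax hK η ≤ p yhat + ε := fmax_le hK _ hη'
  have hmα : fmax hJ α ≤ u jhat + ε := fmax_le hJ _ hα'
  by_cases h : u jhat ≤ p yhat
  · simp only [h, if_true]
    have : max (fmax hK η) (fmax hJ α) ≤ p yhat + ε := by
      apply max_le hmη (le_trans hmα (by linarith))
    linarith
  · simp only [h, if_false]
    push_neg at h
    have : max (fmax hK η) (fmax hJ α) ≤ u jhat + ε := by
      apply max_le (le_trans hmη (by linarith)) hmα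
    linarith
end

section
/- Let K ≥ 1, J ≥ 1, β > 0, let η ∈ Δ^K and α ∈ [0,1]^J, and let p ∈ Δ^K with all p_k > 0 and u ∈ (0,1)^J. Let δ_⊥ denote the conditional L2D regret of the plug-in policy at (p, u) (the gap between max{max_k η_k, max_j α_j} and the utility of the action selected by comparing max_k p_k with max_j u_j and taking the corresponding argmax), and let δ_dec = KL(η ‖ p) + β ∑_{j=1}^J KL(Bern(α_j) ‖ Bern(u_j)) be the conditional decoupled surrogate excess. Then δ_⊥ ≤ max{ 2√2, √(2/β) } · √(δ_dec). -/
open Real Set Finset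

section L2Daux

lemma quadfact {x : ℝ} (hx0 : 0 < x) (hx1 : x < 1) : 4 * x * (1 - x) ≤ 1 := by
  nlinarith [sq_nonneg (2 * x - 1)]

lemma Fderiv (a : ℝ) {x : ℝ} (hx0 : 0 < x) (hx1 : x < 1) :
    HasDerivAt (fun y => -(a * Real.log y) - (1 - a) * Real.log (1 - y) - 2 * (a - y) ^ 2)
      ((x - a) * (1 / (x * (1 - x)) - 4)) x := by
  have h1 : HasDerivAt (fun y => a * Real.log y) (a * x⁻¹) x :=
    (Real.hasDerivAt_log hx0.ne').const_mul a
  have hin : HasDerivAt (fun y : ℝ => 1 - y) (-1) x := by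
    simpa using (hasDerivAt_id x).const_sub 1
  have h2 : HasDerivAt (fun y => Real.log (1 - y)) ((1 - x)⁻¹ * -1) x :=
    (Real.hasDerivAt_log (by intro h; nlinarith [sub_eq_zero.mp h] : (1:ℝ) - x ≠ 0)).comp x hin
  have h2' := h2.const_mul (1 - a)
  have h3 : HasDerivAt (fun y : ℝ => a - y) (-1) x := (hasDerivAt_id x).const_sub a
  have h4 := (h3.fun_pow 2).const_mul 2
  have h := (h1.neg.sub h2').sub h4
  refine h.congr_deriv ?_
  have hx : x ≠ 0 := hx0.ne'
  have h1x : (1:ℝ) - x ≠ 0 := by intro h; nlinarith [sub_eq_zero.mp h]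
  field_simp
  ring

lemma signfact {x : ℝ} (hx0 : 0 < x) (hx1 : x < 1) : 0 ≤ 1 / (x * (1 - x)) - 4 := by
  have hpos : 0 < x * (1 - x) := by nlinarith
  rw [sub_nonneg, le_div_iff₀ hpos]
  nlinarith [quadfact hx0 hx1]

lemma pinsker2 {a b : ℝ} (ha0 : 0 ≤ a) (ha1 : a ≤ 1) (hb0 : 0 < b) (hb1 : b < 1) :
    2 * (a - b) ^ 2 ≤ a * Real.log (a / b) + (1 - a) * Real.log ((1 - a) / (1 - b)) := by
  have h1b : (0:ℝ) < 1 - b := by linarith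
  rcases eq_or_lt_of_le ha0 with h0 | ha0'
  · -- a = 0
    subst h0
    have hd : ∀ x : ℝ, x < 1 →
        HasDerivAt (fun y => -Real.log (1 - y) - 2 * y ^ 2) ((1 - x)⁻¹ - 4 * x) x := by
      intro x hx1
      have hin : HasDerivAt (fun y : ℝ => 1 - y) (-1) x := by
        simpa using (hasDerivAt_id x).const_sub 1
      have h2 : HasDerivAt (fun y => Real.log (1 - y)) ((1 - x)⁻¹ * -1) x :=
        (Real.hasDerivAt_log (by intro h; nlinarith [sub_eq_zero.mp h] : (1:ℝ) - x ≠ 0)).comp x hin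
      have h4 := (hasDerivAt_pow 2 x).const_mul 2
      have h := h2.neg.sub h4
      refine h.congr_deriv ?_
      push_cast
      norm_num
      ring
    have mono : MonotoneOn (fun y => -Real.log (1 - y) - 2 * y ^ 2) (Icc 0 b) := by
      refine monotoneOn_of_hasDerivWithinAt_nonneg (convex_Icc 0 b)
        (fun x hx => (hd x (lt_of_le_of_lt hx.2 hb1)).continuousAt.continuousWithinAt)
        (f' := fun x => (1 - x)⁻¹ - 4 * x)
        (fun x hx => (hd x (lt_of_le_of_lt (interior_subset hx).2 hb1)).hasDerivWithinAt)
        (fun x hx => ?_)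
      rw [interior_Icc] at hx
      have hx0 : 0 < x := hx.1
      have hx1 : x < 1 := lt_trans hx.2 hb1
      have h1x : (0:ℝ) < 1 - x := by linarith
      rw [sub_nonneg, inv_eq_one_div, le_div_iff₀ h1x]
      nlinarith [quadfact hx0 hx1]
    have key := mono (left_mem_Icc.mpr hb0.le) (right_mem_Icc.mpr hb0.le) hb0.le
    simp only [sub_zero, Real.log_one, neg_zero, zero_pow, mul_zero, sub_zero] at key
    have e : Real.log ((1 - 0) / (1 - b)) = -Real.log (1 - b) := by
      rw [sub_zero, one_div, Real.log_inv]
    rw [e, zero_mul]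
    nlinarith [key]
  rcases eq_or_lt_of_le ha1 with h1 | ha1'
  · -- a = 1
    subst h1
    have hd : ∀ x : ℝ, 0 < x →
        HasDerivAt (fun y => -Real.log y - 2 * (1 - y) ^ 2) (-x⁻¹ + 4 * (1 - x)) x := by
      intro x hx0
      have hin : HasDerivAt (fun y : ℝ => 1 - y) (-1) x := by
        simpa using (hasDerivAt_id x).const_sub 1
      have h4 := ((hin.fun_pow 2).const_mul 2)
      have h := (Real.hasDerivAt_log hx0.ne').neg.sub h4
      refine h.congr_deriv ?_
      push_cast
      norm_num
      ring
    have anti : AntitoneOn (fun y => -Real.log y - 2 * (1 - y) ^ 2) (Icc b 1) := by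
      refine antitoneOn_of_hasDerivWithinAt_nonpos (convex_Icc b 1)
        (fun x hx => (hd x (lt_of_lt_of_le hb0 hx.1)).continuousAt.continuousWithinAt)
        (f' := fun x => -x⁻¹ + 4 * (1 - x))
        (fun x hx => (hd x (lt_of_lt_of_le hb0 (interior_subset hx).1)).hasDerivWithinAt)
        (fun x hx => ?_)
      rw [interior_Icc] at hx
      have hx0 : 0 < x := lt_trans hb0 hx.1
      have hx1 : x < 1 := hx.2
      have : 4 * (1 - x) ≤ x⁻¹ := by
        rw [inv_eq_one_div, le_div_iff₀ hx0]
        nlinarith [quadfact hx0 hx1]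
      linarith
    have key := anti (left_mem_Icc.mpr hb1.le) (right_mem_Icc.mpr hb1.le) hb1.le
    simp only [Real.log_one, neg_zero, sub_self, zero_pow, mul_zero, sub_zero] at key
    have e : Real.log (1 / b) = -Real.log b := by rw [one_div, Real.log_inv]
    rw [e]
    have e2 : ((1:ℝ) - 1) * Real.log ((1 - 1) / (1 - b)) = 0 := by norm_num
    rw [e2]
    nlinarith [key]
  · -- 0 < a < 1
    rw [Real.log_div ha0'.ne' hb0.ne', Real.log_div (by linarith) h1b.ne', mul_sub, mul_sub]
    set F : ℝ → ℝ := fun y => -(a * Real.log y) - (1 - a) * Real.log (1 - y) - 2 * (a - y) ^ 2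
      with hF
    have key : F a ≤ F b := by
      rcases le_total a b with hab | hba
      · have mono : MonotoneOn F (Icc a b) := by
          have hsub : ∀ x ∈ Icc a b, 0 < x ∧ x < 1 := fun x hx =>
            ⟨lt_of_lt_of_le ha0' hx.1, lt_of_le_of_lt hx.2 hb1⟩
          refine monotoneOn_of_hasDerivWithinAt_nonneg (convex_Icc a b)
            (fun x hx => ((Fderiv a (hsub x hx).1 (hsub x hx).2).continuousAt).continuousWithinAt)
            (f' := fun x => (x - a) * (1 / (x * (1 - x)) - 4))
            (fun x hx => ?_) (fun x hx => ?_)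
          · have hx' := hsub x (interior_subset hx)
            exact (Fderiv a hx'.1 hx'.2).hasDerivWithinAt
          · rw [interior_Icc] at hx
            have hx' : 0 < x ∧ x < 1 := ⟨lt_trans ha0' hx.1, lt_trans hx.2 hb1⟩
            exact mul_nonneg (by linarith [hx.1]) (signfact hx'.1 hx'.2)
        exact mono (left_mem_Icc.mpr hab) (right_mem_Icc.mpr hab) hab
      · have anti : AntitoneOn F (Icc b a) := by
          have hsub : ∀ x ∈ Icc b a, 0 < x ∧ x < 1 := fun x hx =>
            ⟨lt_of_lt_of_le hb0 hx.1, lt_of_le_of_lt hx.2 ha1'⟩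
          refine antitoneOn_of_hasDerivWithinAt_nonpos (convex_Icc b a)
            (fun x hx => ((Fderiv a (hsub x hx).1 (hsub x hx).2).continuousAt).continuousWithinAt)
            (f' := fun x => (x - a) * (1 / (x * (1 - x)) - 4))
            (fun x hx => ?_) (fun x hx => ?_)
          · have hx' := hsub x (interior_subset hx)
            exact (Fderiv a hx'.1 hx'.2).hasDerivWithinAt
          · rw [interior_Icc] at hx
            have hx' : 0 < x ∧ x < 1 := ⟨lt_trans hb0 hx.1, lt_trans hx.2 ha1'⟩
            exact mul_nonpos_of_nonpos_of_nonneg (by linarith [hx.2]) (signfact hx'.1 hx'.2)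
        exact anti (left_mem_Icc.mpr hba) (right_mem_Icc.mpr hba) hba
    simp only [hF] at key
    nlinarith [key]


lemma logsum {ι : Type*} (S : Finset ι) (f g : ι → ℝ)
    (hf : ∀ i ∈ S, 0 ≤ f i) (hg : ∀ i ∈ S, 0 < g i) :
    (∑ i ∈ S, f i) * Real.log ((∑ i ∈ S, f i) / (∑ i ∈ S, g i))
      ≤ ∑ i ∈ S, f i * Real.log (f i / g i) := by
  rcases S.eq_empty_or_nonempty with rfl | hS
  · simp
  have hG : 0 < ∑ i ∈ S, g i := Finset.sum_pos hg hS
  set G := ∑ i ∈ S, g i with hGdef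
  have h0 : ∀ i ∈ S, 0 ≤ g i / G := fun i hi => div_nonneg (hg i hi).le hG.le
  have h1 : ∑ i ∈ S, g i / G = 1 := by
    rw [← Finset.sum_div, div_self hG.ne']
  have hmem : ∀ i ∈ S, f i / g i ∈ Set.Ici (0:ℝ) := fun i hi =>
    div_nonneg (hf i hi) (hg i hi).le
  have key := Real.convexOn_mul_log.map_sum_le h0 h1 hmem
  have e1 : ∑ i ∈ S, (g i / G) • (f i / g i) = (∑ i ∈ S, f i) / G := by
    rw [Finset.sum_div]
    refine Finset.sum_congr rfl fun i hi => ?_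
    rw [smul_eq_mul]
    field_simp [(hg i hi).ne']
  have e2 : ∑ i ∈ S, (g i / G) • ((f i / g i) * Real.log (f i / g i))
      = (∑ i ∈ S, f i * Real.log (f i / g i)) / G := by
    rw [Finset.sum_div]
    refine Finset.sum_congr rfl fun i hi => ?_
    rw [smul_eq_mul]
    field_simp [(hg i hi).ne']
  rw [e1] at key
  simp only [smul_eq_mul] at key e2
  rw [e2] at key
  have key2 : (∑ i ∈ S, f i) * Real.log ((∑ i ∈ S, f i) / G) / G
      ≤ (∑ i ∈ S, f i * Real.log (f i / g i)) / G := by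
    calc (∑ i ∈ S, f i) * Real.log ((∑ i ∈ S, f i) / G) / G
        = (∑ i ∈ S, f i) / G * Real.log ((∑ i ∈ S, f i) / G) := by ring
      _ ≤ _ := key
  exact (div_le_div_iff_of_pos_right hG).mp key2

lemma pinsker_cat {K : ℕ} (η p : Fin K → ℝ) (hη0 : ∀ k, 0 ≤ η k) (hη1 : ∑ k, η k = 1)
    (hp0 : ∀ k, 0 < p k) (hp1 : ∑ k, p k = 1) (k : Fin K) :
    2 * (η k - p k) ^ 2 ≤ ∑ i, η i * Real.log (η i / p i) := by
  have hsplitA : η k * Real.log (η k / p k) + ∑ i ∈ Finset.univ.erase k, η i * Real.log (η i / p i)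
      = ∑ i, η i * Real.log (η i / p i) :=
    Finset.add_sum_erase _ (fun i => η i * Real.log (η i / p i)) (Finset.mem_univ k)
  have heη : ∑ i ∈ Finset.univ.erase k, η i = 1 - η k := by
    rw [Finset.sum_erase_eq_sub (Finset.mem_univ k), hη1]
  have hep : ∑ i ∈ Finset.univ.erase k, p i = 1 - p k := by
    rw [Finset.sum_erase_eq_sub (Finset.mem_univ k), hp1]
  rcases (Finset.univ.erase k).eq_empty_or_nonempty with he | hne
  · have hη : η k = 1 := by rw [he] at heη; simp at heη; linarith
    have hp : p k = 1 := by rw [he] at hep; simp at hep; linarith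
    have : ∑ i, η i * Real.log (η i / p i)
        = η k * Real.log (η k / p k) := by rw [← hsplitA, he]; simp
    rw [this, hη, hp]
    norm_num
  · have hppos : 0 < ∑ i ∈ Finset.univ.erase k, p i :=
      Finset.sum_pos (fun i _ => hp0 i) hne
    have hpk1 : p k < 1 := by rw [hep] at hppos; linarith
    have hηk1 : η k ≤ 1 := by
      have : 0 ≤ ∑ i ∈ Finset.univ.erase k, η i :=
        Finset.sum_nonneg fun i _ => hη0 i
      rw [heη] at this; linarith
    have hls := logsum (Finset.univ.erase k) η p (fun i _ => hη0 i) (fun i _ => hp0 i)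
    rw [heη, hep] at hls
    have hb := pinsker2 (hη0 k) hηk1 (hp0 k) hpk1
    linarith

end L2Daux

/-- Pointwise calibration inequality for the decoupled surrogate: the
conditional L2D regret `δ_⊥` of the plug-in policy is bounded by
`max(2√2, √(2/β)) · √δ_dec`, where
`δ_dec = KL(η‖p) + β ∑_j KL(Bern(α_j)‖Bern(u_j))` is the conditional
decoupled surrogate excess. -/
theorem stmt18 (K J : ℕ) (hK : 0 < K) (hJ : 0 < J)
    (β : ℝ) (hβ : 0 < β)
    (η : Fin K → ℝ) (hη0 : ∀ k, 0 ≤ η k) (hη1 : ∑ k, η k = 1)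
    (α : Fin J → ℝ) (hα : ∀ j, α j ∈ Set.Icc (0 : ℝ) 1)
    (p : Fin K → ℝ) (hp0 : ∀ k, 0 < p k) (hp1 : ∑ k, p k = 1)
    (u : Fin J → ℝ) (hu : ∀ j, u j ∈ Set.Ioo (0 : ℝ) 1)
    (yhat : Fin K) (hyhat : ∀ k, p k ≤ p yhat)
    (jhat : Fin J) (hjhat : ∀ j, u j ≤ u jhat)
    (δperp : ℝ)
    (hδperp : δperp = max (fmax hK η) (fmax hJ α)
      - (if u jhat ≤ p yhat then η yhat else α jhat))
    (δdec : ℝ)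
    (hδdec : δdec = ∑ k, η k * Real.log (η k / p k)
      + β * ∑ j, (α j * Real.log (α j / u j)
          + (1 - α j) * Real.log ((1 - α j) / (1 - u j)))) :
    δperp ≤ max (2 * Real.sqrt 2) (Real.sqrt (2 / β)) * Real.sqrt δdec := by
  set A := ∑ k, η k * Real.log (η k / p k) with hA
  set B := ∑ j, (α j * Real.log (α j / u j)
      + (1 - α j) * Real.log ((1 - α j) / (1 - u j))) with hB
  have hA0 : 0 ≤ A := by
    have h := logsum Finset.univ η p (fun i _ => hη0 i) (fun i _ => hp0 i)
    rw [hη1, hp1] at h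
    simpa using h
  have hBterm : ∀ j, 2 * (α j - u j) ^ 2 ≤ α j * Real.log (α j / u j)
      + (1 - α j) * Real.log ((1 - α j) / (1 - u j)) :=
    fun j => pinsker2 (hα j).1 (hα j).2 (hu j).1 (hu j).2
  have hBterm0 : ∀ j, 0 ≤ α j * Real.log (α j / u j)
      + (1 - α j) * Real.log ((1 - α j) / (1 - u j)) :=
    fun j => le_trans (by positivity) (hBterm j)
  have hB0 : 0 ≤ B := Finset.sum_nonneg fun j _ => hBterm0 j
  have hδ0 : 0 ≤ δdec := by
    rw [hδdec]
    have := mul_nonneg hβ.le hB0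
    linarith
  have hAδ : A ≤ δdec := by
    rw [hδdec]
    have := mul_nonneg hβ.le hB0
    linarith
  have hBδ : B ≤ δdec / β := by
    rw [le_div_iff₀ hβ, mul_comm]
    rw [hδdec]
    linarith
  set Ep := Real.sqrt (δdec / 2) with hEpdef
  set Eu := Real.sqrt (δdec / (2 * β)) with hEudef
  have hEp0 : 0 ≤ Ep := Real.sqrt_nonneg _
  have hEu0 : 0 ≤ Eu := Real.sqrt_nonneg _
  have hEp : ∀ k, |η k - p k| ≤ Ep := by
    intro k
    have h := pinsker_cat η p hη0 hη1 hp0 hp1 k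
    have h2 : (η k - p k) ^ 2 ≤ δdec / 2 := by rw [← hA] at h; linarith
    calc |η k - p k| = Real.sqrt ((η k - p k) ^ 2) := (Real.sqrt_sq_eq_abs _).symm
      _ ≤ Ep := Real.sqrt_le_sqrt h2
  have hEu : ∀ j, |α j - u j| ≤ Eu := by
    intro j
    have h1 : α j * Real.log (α j / u j)
        + (1 - α j) * Real.log ((1 - α j) / (1 - u j)) ≤ B :=
      Finset.single_le_sum (fun i _ => hBterm0 i) (Finset.mem_univ j)
    have h2 : (α j - u j) ^ 2 ≤ δdec / (2 * β) := by
      have he : δdec / (2 * β) = (δdec / β) / 2 := by ring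
      rw [he]
      linarith [hBterm j]
    calc |α j - u j| = Real.sqrt ((α j - u j) ^ 2) := (Real.sqrt_sq_eq_abs _).symm
      _ ≤ Eu := Real.sqrt_le_sqrt h2
  -- regret bound
  set M := max Ep Eu with hM
  have hEpM : Ep ≤ M := le_max_left _ _
  have hEuM : Eu ≤ M := le_max_right _ _
  have hpη : ∀ k, η k ≤ p k + Ep := fun k => by linarith [(abs_le.mp (hEp k)).2]
  have hηp : ∀ k, p k ≤ η k + Ep := fun k => by linarith [(abs_le.mp (hEp k)).1]
  have hαu : ∀ j, α j ≤ u j + Eu := fun j => by linarith [(abs_le.mp (hEu j)).2]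
  have huα : ∀ j, u j ≤ α j + Eu := fun j => by linarith [(abs_le.mp (hEu j)).1]
  have hmain : δperp ≤ 2 * M := by
    rw [hδperp]
    by_cases h : u jhat ≤ p yhat
    · rw [if_pos h]
      have h1 : fmax hK η ≤ η yhat + 2 * M :=
        Finset.sup'_le _ _ fun k _ => by
          have := hpη k; have := hyhat k; have := hηp yhat; linarith
      have h2 : fmax hJ α ≤ η yhat + 2 * M :=
        Finset.sup'_le _ _ fun j _ => by
          have := hαu j; have := hjhat j; have := hηp yhat; linarith
      have := max_le h1 h2
      linarith
    · rw [if_neg h]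
      push_neg at h
      have h1 : fmax hK η ≤ α jhat + 2 * M :=
        Finset.sup'_le _ _ fun k _ => by
          have := hpη k; have := hyhat k; have := huα jhat; linarith
      have h2 : fmax hJ α ≤ α jhat + 2 * M :=
        Finset.sup'_le _ _ fun j _ => by
          have := hαu j; have := hjhat j; have := huα jhat; linarith
      have := max_le h1 h2
      linarith
  -- sqrt arithmetic
  have hsqrt4 : Real.sqrt 4 = 2 := by
    rw [show (4:ℝ) = 2 ^ 2 by norm_num, Real.sqrt_sq (by norm_num : (0:ℝ) ≤ 2)]
  have hs2 : Real.sqrt 2 * Real.sqrt 2 = 2 := Real.mul_self_sqrt (by norm_num)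
  have hs2pos : (0:ℝ) < Real.sqrt 2 := Real.sqrt_pos.mpr (by norm_num)
  have hs2sq : Real.sqrt 2 ^ 2 = 2 := Real.sq_sqrt (by norm_num)
  have hsplit2 : Real.sqrt δdec = Real.sqrt 2 * Real.sqrt (δdec / 2) := by
    rw [← Real.sqrt_mul (by norm_num : (0:ℝ) ≤ 2)]
    congr 1
    ring
  have h2Ep : 2 * Ep = Real.sqrt 2 * Real.sqrt δdec := by
    rw [hEpdef, hsplit2, ← mul_assoc, hs2]
  have hs2b : (0:ℝ) < Real.sqrt (2 * β) := Real.sqrt_pos.mpr (by positivity)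
  have hprod : Real.sqrt (2 / β) * Real.sqrt (2 * β) = 2 := by
    rw [← Real.sqrt_mul (by positivity : (0:ℝ) ≤ 2 / β)]
    rw [show 2 / β * (2 * β) = 4 by field_simp; ring]
    exact hsqrt4
  have hsplit2b : Real.sqrt δdec = Real.sqrt (2 * β) * Real.sqrt (δdec / (2 * β)) := by
    rw [← Real.sqrt_mul (by positivity : (0:ℝ) ≤ 2 * β)]
    congr 1
    field_simp
  have h2Eu : 2 * Eu = Real.sqrt (2 / β) * Real.sqrt δdec := by
    rw [hEudef, hsplit2b, ← mul_assoc, hprod]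
  have hsd0 : 0 ≤ Real.sqrt δdec := Real.sqrt_nonneg _
  have hfin : 2 * M ≤ max (2 * Real.sqrt 2) (Real.sqrt (2 / β)) * Real.sqrt δdec := by
    rw [hM, mul_max_of_nonneg _ _ (by norm_num : (0:ℝ) ≤ 2)]
    apply max_le
    · rw [h2Ep]
      apply mul_le_mul_of_nonneg_right _ hsd0
      have := Real.sqrt_nonneg 2
      calc Real.sqrt 2 ≤ 2 * Real.sqrt 2 := by linarith
        _ ≤ _ := le_max_left _ _
    · rw [h2Eu]
      exact mul_le_mul_of_nonneg_right (le_max_right _ _) hsd0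
  linarith
end
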